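/- Fix β : ℝ and a real matrix A of size m × n. The matrix computed by the optimized BATAX derivative program, namely β • Σ_i vecMulVec (A i) (A i) (the β-scaled sum over rows i of A of the outer product of row i with itself), equals the Jacobian at every point x of the BATAX function f(x) j = Σ_{i,k} β * A i j * A i k * x k; that is, for every x and every direction v, fderiv ℝ f x v = (β • Σ_i vecMulVec (A i) (A i)).mulVec v. -/
import Mathlib


open Matrix BigOperators

theorem batax_optimized_program_is_jacobian (m n : ℕ) (β : ℝ)
    (A : Matrix (Fin m) (Fin n) ℝ)
    (f : (Fin n → ℝ) → (Fin n → ℝ))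
    (hf : ∀ x j, f x j = ∑ i, ∑ k, β * A i j * A i k * x k) :
    Differentiable ℝ f ∧
    ∀ (x v : Fin n → ℝ),
      fderiv ℝ f x v = (β • ∑ i, Matrix.vecMulVec (A i) (A i)).mulVec v := by
  set M : Matrix (Fin n) (Fin n) ℝ := β • ∑ i, Matrix.vecMulVec (A i) (A i) with hM
  let L : (Fin n → ℝ) →L[ℝ] (Fin n → ℝ) := LinearMap.toContinuousLinearMap M.mulVecLin
  have hfL : f = L := by
    funext x
    funext j
    rw [hf]
    show _ = M.mulVec x j
    simp only [hM, Matrix.mulVec, dotProduct, Matrix.smul_apply, Matrix.sum_apply,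
      Matrix.vecMulVec_apply, smul_eq_mul, Finset.sum_mul, Finset.mul_sum]
    rw [Finset.sum_comm]
    apply Finset.sum_congr rfl
    intro i _
    apply Finset.sum_congr rfl
    intro k _
    ring
  constructor
  · rw [hfL]; exact L.differentiable
  · intro x v
    rw [hfL, L.fderiv]
    rfl
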